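/- arXiv:0711.2419 — 3 statements merged into one kernel-verified Lean document; each statement's English description precedes it below -/
import Mathlib

section
/- If a Markov semigroup P_t with carré du champ Γ satisfies the gradient bound Γ(P_t f, P_t f)(e) ≤ K P_t(Γ(f,f))(e) for all test functions f and all t ≥ 0 (with constant K > 0), and the interpolation identity of Theorem 4.1 holds, then for each t > 0 the local Poincaré inequality P_t(f²)(e) − (P_t f(e))² ≤ K t · P_t(Γ(f,f))(e) holds, i.e., the spectral gap constant may be taken a_t = 1/(2Kt). -/
open Set

/-
Along the interpolation `F s = P_s ((P_{t-s} f)²)(e)`, which runs from `(P_t f(e))²` at `s = 0`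
to `P_t(f²)(e)` at `s = t`, the derivative is `P_s Γ(P_{t-s} f, P_{t-s} f)(e)`. Positivity of
`P_s`, the gradient bound and the semigroup law bound it by the constant `K P_t(Γ(f,f))(e)`, so
the mean value inequality gives the variance bound `K t P_t(Γ(f,f))(e)`.
-/

theorem sub_le_mul_sub_of_hasDerivAt_le {F F' : ℝ → ℝ} {a b C : ℝ} (hab : a ≤ b)
    (hF : ∀ s ∈ Icc a b, HasDerivAt F (F' s) s) (hF' : ∀ s ∈ Icc a b, F' s ≤ C) :
    F b - F a ≤ C * (b - a) := by
  have hint : ∀ s ∈ interior (Icc a b), s ∈ Icc a b := fun s hs => interior_subset hs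
  refine (convex_Icc a b).image_sub_le_mul_sub_of_deriv_le
    (fun s hs => (hF s hs).continuousAt.continuousWithinAt)
    (fun s hs => (hF s (hint s hs)).differentiableAt.differentiableWithinAt)
    (fun s hs => ?_) a (left_mem_Icc.2 hab) b (right_mem_Icc.2 hab) hab
  rw [(hF s (hint s hs)).deriv]
  exact hF' s (hint s hs)

theorem gradient_bound_along_semigroup {G : Type*} {P : ℝ → (G → ℝ) → (G → ℝ)}
    {Γ : (G → ℝ) → (G → ℝ) → (G → ℝ)} {K : ℝ}
    (hsemigroup : ∀ s u : ℝ, 0 ≤ s → 0 ≤ u → ∀ g : G → ℝ, P s (P u g) = P (s + u) g)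
    (hmono : ∀ s : ℝ, 0 ≤ s → ∀ g h : G → ℝ, (∀ x, g x ≤ h x) → ∀ x, P s g x ≤ P s h x)
    (hsmul : ∀ s : ℝ, 0 ≤ s → ∀ (c : ℝ) (g : G → ℝ), P s (fun x => c * g x) = fun x => c * P s g x)
    (hgrad : ∀ u : ℝ, 0 ≤ u → ∀ g : G → ℝ, ∀ x, Γ (P u g) (P u g) x ≤ K * P u (Γ g g) x)
    {s t : ℝ} (hs : s ∈ Icc 0 t) (f : G → ℝ) (x : G) :
    P s (Γ (P (t - s) f) (P (t - s) f)) x ≤ K * P t (Γ f f) x := by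
  have hts : 0 ≤ t - s := sub_nonneg.2 hs.2
  calc P s (Γ (P (t - s) f) (P (t - s) f)) x
      ≤ P s (fun y => K * P (t - s) (Γ f f) y) x := hmono s hs.1 _ _ (hgrad (t - s) hts f) x
    _ = K * P s (P (t - s) (Γ f f)) x := by rw [hsmul s hs.1]
    _ = K * P t (Γ f f) x := by rw [hsemigroup s (t - s) hs.1 hts, add_sub_cancel]

theorem stmt6_general {G : Type*} (P : ℝ → (G → ℝ) → (G → ℝ))
    (Γ : (G → ℝ) → (G → ℝ) → (G → ℝ)) (K : ℝ) (e : G)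
    (hP0 : ∀ g : G → ℝ, P 0 g = g)
    (hsemigroup : ∀ s u : ℝ, 0 ≤ s → 0 ≤ u → ∀ g : G → ℝ, P s (P u g) = P (s + u) g)
    (hmono : ∀ s : ℝ, 0 ≤ s → ∀ g h : G → ℝ, (∀ x, g x ≤ h x) → ∀ x, P s g x ≤ P s h x)
    (hsmul : ∀ s : ℝ, 0 ≤ s → ∀ (c : ℝ) (g : G → ℝ), P s (fun x => c * g x) = fun x => c * P s g x)
    (hgrad : ∀ u : ℝ, 0 ≤ u → ∀ g : G → ℝ, ∀ x,
      Γ (P u g) (P u g) x ≤ K * P u (Γ g g) x)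
    (t : ℝ) (ht : 0 < t) (f : G → ℝ)
    (hderiv : ∀ x : G, ∀ s ∈ Set.Icc (0:ℝ) t,
      HasDerivAt (fun s' => P s' (fun y => (P (t - s') f y) ^ 2) x)
        (P s (Γ (P (t - s) f) (P (t - s) f)) x) s) :
    P t (fun y => (f y) ^ 2) e - (P t f e) ^ 2 ≤ K * t * P t (Γ f f) e := by
  have key := sub_le_mul_sub_of_hasDerivAt_le ht.le (hderiv e)
    fun s hs => gradient_bound_along_semigroup hsemigroup hmono hsmul hgrad hs f e
  simp only [sub_self, sub_zero, hP0] at key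
  linarith

/-- with the constant gradient bound `Γ(P_t f, P_t f) ≤ K P_t(Γ(f,f))`
(Driver–Melcher) and the interpolation identity of Theorem 4.1, the local
Poincaré inequality `P_t(f²)(e) − (P_t f(e))² ≤ K t · P_t(Γ(f,f))(e)` holds,
i.e. the spectral gap constant can be taken `a_t = 1/(2Kt)`. -/
theorem stmt6 {G : Type*} (P : ℝ → (G → ℝ) → (G → ℝ))
    (Γ : (G → ℝ) → (G → ℝ) → (G → ℝ)) (K : ℝ) (hK : 0 < K) (e : G)
    (hP0 : ∀ g : G → ℝ, P 0 g = g)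
    (hsemigroup : ∀ s u : ℝ, 0 ≤ s → 0 ≤ u → ∀ g : G → ℝ, P s (P u g) = P (s + u) g)
    (hmono : ∀ s : ℝ, 0 ≤ s → ∀ g h : G → ℝ, (∀ x, g x ≤ h x) → ∀ x, P s g x ≤ P s h x)
    (hsmul : ∀ s : ℝ, 0 ≤ s → ∀ (c : ℝ) (g : G → ℝ), P s (fun x => c * g x) = fun x => c * P s g x)
    (hgrad : ∀ u : ℝ, 0 ≤ u → ∀ g : G → ℝ, ∀ x,
      Γ (P u g) (P u g) x ≤ K * P u (Γ g g) x)
    (t : ℝ) (ht : 0 < t) (f : G → ℝ)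
    (hderiv : ∀ x : G, ∀ s ∈ Set.Icc (0:ℝ) t,
      HasDerivAt (fun s' => P s' (fun y => (P (t - s') f y) ^ 2) x)
        (P s (Γ (P (t - s) f) (P (t - s) f)) x) s) :
    P t (fun y => (f y) ^ 2) e - (P t f e) ^ 2 ≤ K * t * P t (Γ f f) e :=
  stmt6_general P Γ K e hP0 hsemigroup hmono hsmul hgrad t ht f hderiv
end

section
/- Let u : [0,∞) → [0,∞) be differentiable and satisfy u'(t) ≤ −α/(R+t) · u(t) + β/(R+t) · u(t) + 2β/(R+t) · √(u(t)) for all t ≥ 0, where α > 3β > 0 and R > 0. Then sup_{t≥0} u(t) ≤ max(u(0), (2β/(α−β))²). -/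
/-! Writing `s = √u`, the right-hand side of the differential inequality equals
`s (2β - (α - β) s) / (R + t)`, which is negative as soon as `s > 2β/(α - β)`.
So `u` is strictly decreasing whenever it lies above `(2β/(α - β))²`, and therefore can never
rise above `max (u 0) ((2β/(α - β))²)`. -/

open Set

theorem le_max_of_hasDerivAt_neg_of_lt {u u' : ℝ → ℝ} {a M : ℝ}
    (hderiv : ∀ t, a ≤ t → HasDerivAt u (u' t) t)
    (hneg : ∀ t, a ≤ t → M < u t → u' t < 0) :
    ∀ t, a ≤ t → u t ≤ max (u a) M := by
  intro t ht
  refine le_of_forall_pos_le_add fun ε hε => ?_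
  have hcont : ContinuousOn u (Icc a t) := fun x hx =>
    (hderiv x hx.1).continuousAt.continuousWithinAt
  have hright : ∀ x ∈ Ico a t, HasDerivWithinAt u (u' x) (Ici x) x := fun x hx =>
    (hderiv x hx.1).hasDerivWithinAt
  have hstart : u a ≤ max (u a) M + ε := by linarith [le_max_left (u a) M]
  -- the margin `ε` makes `M < u x` hold at every touching point of the constant barrier
  have htouch : ∀ x ∈ Ico a t, u x = max (u a) M + ε → u' x < 0 := fun x hx hx_eq =>
    hneg x hx.1 (by linarith [le_max_right (u a) M])
  exact image_le_of_deriv_right_lt_deriv_boundary hcont hright hstart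
    (fun x => hasDerivAt_const x _) htouch ⟨ht, le_rfl⟩

theorem drift_neg_of_lt {α β r s : ℝ} (hr : 0 < r) (hs : 0 < s) (h : 2 * β < (α - β) * s) :
    -α / r * s ^ 2 + β / r * s ^ 2 + 2 * β / r * s < 0 := by
  have hfactor : -α / r * s ^ 2 + β / r * s ^ 2 + 2 * β / r * s
      = s * (2 * β - (α - β) * s) / r := by
    field_simp
    ring
  rw [hfactor]
  exact div_neg_of_neg_of_pos (mul_neg_of_pos_of_neg hs (by linarith)) hr

/-- ODE comparison for the annealing estimate: if `u ≥ 0` satisfies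
`u' ≤ −α/(R+t) u + β/(R+t) u + 2β/(R+t) √u` with `α > 3β > 0` and `R > 0`, then
`sup_{t ≥ 0} u(t) ≤ max (u 0) ((2β/(α−β))²)`. -/
theorem stmt7 (u u' : ℝ → ℝ) (α β R : ℝ)
    (hβ : 0 < β) (hαβ : 3 * β < α) (hR : 0 < R)
    (hu_nonneg : ∀ t, 0 ≤ t → 0 ≤ u t)
    (hu_deriv : ∀ t, 0 ≤ t → HasDerivAt u (u' t) t)
    (hu_ineq : ∀ t, 0 ≤ t →
      u' t ≤ -α / (R + t) * u t + β / (R + t) * u t + 2 * β / (R + t) * Real.sqrt (u t)) :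
    ∀ t, 0 ≤ t → u t ≤ max (u 0) ((2 * β / (α - β)) ^ 2) := by
  have hαβ' : 0 < α - β := by linarith
  have hthreshold : 0 < 2 * β / (α - β) := by positivity
  refine le_max_of_hasDerivAt_neg_of_lt hu_deriv fun t ht hlt => ?_
  have hsqrt : 2 * β / (α - β) < Real.sqrt (u t) := (Real.lt_sqrt hthreshold.le).mpr hlt
  have hdrift := drift_neg_of_lt (by linarith : 0 < R + t) (hthreshold.trans hsqrt)
    ((div_lt_iff₀' hαβ').mp hsqrt)
  rw [Real.sq_sqrt (hu_nonneg t ht)] at hdrift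
  exact (hu_ineq t ht).trans_lt hdrift
end

section
/- Let U : M → ℝ be continuous on a compact metric measure space (M, μ) with μ(M) > 0 and μ giving positive mass to every nonempty open set. For ε > 0 define the Gibbs measure μ_ε(dx) = Z_ε^{−1} exp(−U(x)/ε²) μ(dx). Then for every δ > 0, lim_{ε→0} μ_ε({x : U(x) ≥ inf U + δ}) = 0. -/
open MeasureTheory Filter

/-!
Let `m = inf U` and `t = ε²`. On `{U ≥ m + δ}` the Boltzmann weight `exp (-U / t)` is at most
`exp (-(m + δ) / t)`, while on the open set `{U < m + δ / 2}`, which is nonempty and hence has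
positive mass, it is at least `exp (-(m + δ / 2) / t)`. So the Gibbs mass of `{U ≥ m + δ}` is at
most a constant times `exp (-(δ / 2) / ε²)`, which tends to `0`.
-/

open Real Set

noncomputable def gibbsMass {X : Type*} [MeasurableSpace X] (μ : Measure X) (U : X → ℝ)
    (t : ℝ) (s : Set X) : ℝ :=
  (∫ x in s, exp (-U x / t) ∂μ) / ∫ x, exp (-U x / t) ∂μ

section Gibbs

variable {X : Type*} [MeasurableSpace X] (μ : Measure X) {U : X → ℝ} {t : ℝ}

lemma gibbsMass_nonneg (s : Set X) : 0 ≤ gibbsMass μ U t s :=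
  div_nonneg (integral_nonneg fun _ => (exp_pos _).le) (integral_nonneg fun _ => (exp_pos _).le)

variable [IsFiniteMeasure μ]

lemma setIntegral_exp_neg_div_le (ht : 0 ≤ t) (a : ℝ) :
    ∫ x in {x | a ≤ U x}, exp (-U x / t) ∂μ ≤ exp (-a / t) * μ.real univ := by
  have hbound : ∀ x ∈ {x | a ≤ U x}, ‖exp (-U x / t)‖ ≤ exp (-a / t) := fun x hx => by
    rw [norm_of_nonneg (exp_pos _).le]
    exact exp_le_exp.2 (div_le_div_of_nonneg_right (neg_le_neg hx) ht)
  calc ∫ x in {x | a ≤ U x}, exp (-U x / t) ∂μ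
      ≤ ‖∫ x in {x | a ≤ U x}, exp (-U x / t) ∂μ‖ := le_norm_self _
    _ ≤ exp (-a / t) * μ.real {x | a ≤ U x} :=
        norm_setIntegral_le_of_norm_le_const (measure_lt_top μ _) hbound
    _ ≤ exp (-a / t) * μ.real univ :=
        mul_le_mul_of_nonneg_left (measureReal_mono (subset_univ _)) (exp_pos _).le

lemma exp_neg_div_mul_le_integral (ht : 0 ≤ t) (hint : Integrable (fun x => exp (-U x / t)) μ)
    {b : ℝ} (hmeas : MeasurableSet {x | U x < b}) :
    exp (-b / t) * μ.real {x | U x < b} ≤ ∫ x, exp (-U x / t) ∂μ :=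
  calc exp (-b / t) * μ.real {x | U x < b}
      ≤ ∫ x in {x | U x < b}, exp (-U x / t) ∂μ :=
        setIntegral_ge_of_const_le_real hmeas (measure_ne_top μ _)
          (fun _ hx => exp_le_exp.2 (div_le_div_of_nonneg_right (neg_le_neg (le_of_lt hx)) ht))
          hint.integrableOn
    _ ≤ ∫ x, exp (-U x / t) ∂μ :=
        setIntegral_le_integral hint (Eventually.of_forall fun _ => (exp_pos _).le)

lemma gibbsMass_superlevel_le (ht : 0 ≤ t) (hint : Integrable (fun x => exp (-U x / t)) μ)
    (a : ℝ) {b : ℝ} (hmeas : MeasurableSet {x | U x < b}) (hpos : 0 < μ.real {x | U x < b}) :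
    gibbsMass μ U t {x | a ≤ U x} ≤
      exp (-(a - b) / t) * (μ.real univ / μ.real {x | U x < b}) :=
  calc gibbsMass μ U t {x | a ≤ U x}
      ≤ exp (-a / t) * μ.real univ / (exp (-b / t) * μ.real {x | U x < b}) :=
        div_le_div₀ (by positivity) (setIntegral_exp_neg_div_le μ ht a) (by positivity)
          (exp_neg_div_mul_le_integral μ ht hint hmeas)
    _ = exp (-(a - b) / t) * (μ.real univ / μ.real {x | U x < b}) := by
        rw [mul_div_mul_comm, ← exp_sub]
        ring_nf

end Gibbs

lemma tendsto_exp_neg_div_sq_nhdsGT_zero {c : ℝ} (hc : 0 < c) :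
    Tendsto (fun ε : ℝ => exp (-c / ε ^ 2)) (nhdsWithin 0 (Ioi 0)) (nhds 0) := by
  have hinv : Tendsto (fun ε : ℝ => c * (ε⁻¹) ^ 2) (nhdsWithin 0 (Ioi 0)) atTop :=
    ((tendsto_pow_atTop two_ne_zero).comp tendsto_inv_nhdsGT_zero).const_mul_atTop hc
  refine tendsto_exp_atBot.comp ((tendsto_neg_atTop_atBot.comp hinv).congr fun ε => ?_)
  simp only [Function.comp_apply, inv_pow, div_eq_mul_inv, neg_mul]

theorem stmt9_general {M : Type*} [MetricSpace M] [CompactSpace M] [Nonempty M]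
    [MeasurableSpace M] [BorelSpace M]
    (μ : Measure M) [IsFiniteMeasure μ]
    (hμ_open : ∀ O : Set M, IsOpen O → O.Nonempty → 0 < μ O)
    (U : M → ℝ) (hU : Continuous U) :
    ∀ δ : ℝ, 0 < δ →
      Tendsto
        (fun ε : ℝ =>
          (∫ x in {x : M | (⨅ y, U y) + δ ≤ U x}, Real.exp (-U x / ε ^ 2) ∂μ) /
            (∫ x, Real.exp (-U x / ε ^ 2) ∂μ))
        (nhdsWithin 0 (Set.Ioi 0)) (nhds 0) := by
  intro δ hδ
  set m := ⨅ y, U y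
  obtain ⟨x₀, -, hx₀⟩ := isCompact_univ.exists_isMinOn univ_nonempty hU.continuousOn
  have hx₀m : U x₀ ≤ m := le_ciInf fun y => hx₀ (mem_univ y)
  have hopen : IsOpen {x | U x < m + δ / 2} := isOpen_lt hU continuous_const
  have hpos : 0 < μ.real {x | U x < m + δ / 2} :=
    ENNReal.toReal_pos (hμ_open _ hopen ⟨x₀, show U x₀ < m + δ / 2 by linarith⟩).ne'
      (measure_ne_top μ _)
  have hint : ∀ t, Integrable (fun x => exp (-U x / t)) μ := fun t =>
    (hU.neg.div_const t).rexp.integrable_of_hasCompactSupport (HasCompactSupport.of_compactSpace _)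
  have hgap : m + δ - (m + δ / 2) = δ / 2 := by ring
  have hlim := (tendsto_exp_neg_div_sq_nhdsGT_zero (half_pos hδ)).mul_const
    (μ.real univ / μ.real {x | U x < m + δ / 2})
  rw [zero_mul] at hlim
  refine squeeze_zero (fun ε => gibbsMass_nonneg μ _) (fun ε => ?_) hlim
  exact (gibbsMass_superlevel_le μ (sq_nonneg ε) (hint _) (m + δ) hopen.measurableSet
    hpos).trans_eq (by rw [hgap])

/-- concentration of Gibbs measures: on a compact metric measure
space with `μ` charging every nonempty open set, for continuous `U` and every
`δ > 0`, the Gibbs measure `μ_ε = Z_ε^{-1} e^{-U/ε²} μ` of the set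
`{U ≥ inf U + δ}` tends to `0` as `ε → 0⁺`. -/
theorem stmt9 {M : Type*} [MetricSpace M] [CompactSpace M] [Nonempty M]
    [MeasurableSpace M] [BorelSpace M]
    (μ : Measure M) [IsFiniteMeasure μ] (hμ : 0 < μ Set.univ)
    (hμ_open : ∀ O : Set M, IsOpen O → O.Nonempty → 0 < μ O)
    (U : M → ℝ) (hU : Continuous U) :
    ∀ δ : ℝ, 0 < δ →
      Tendsto
        (fun ε : ℝ =>
          (∫ x in {x : M | (⨅ y, U y) + δ ≤ U x}, Real.exp (-U x / ε ^ 2) ∂μ) /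
            (∫ x, Real.exp (-U x / ε ^ 2) ∂μ))
        (nhdsWithin 0 (Set.Ioi 0)) (nhds 0) :=
  stmt9_general μ hμ_open U hU
end
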